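/- The geodesic distance on any projective space P^n_𝔽 (𝔽 = ℝ, ℂ, ℍ; n ≥ 2) is not of negative type, since P^n_𝔽 contains RP² as a geodesic (isometrically embedded, distance-preserving) subspace and the geodesic distance on RP² is not of negative type. -/

import Mathlib

open Finset

/-- Geodesic distance on the projective space `P^n_𝔽`, in terms of nonzero
representative vectors: `cos d(x,y) = |(x,y)| / ((x,x)(y,y))^{1/2}` where
`(x,y) = ∑ x̄ⁱ yⁱ` is the standard `𝔽`-hermitian inner product (so
`(x,x) = ∑ ‖xⁱ‖²`). -/
noncomputable def projDist {𝔽 : Type*} [NormedDivisionRing 𝔽] [StarRing 𝔽]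
    {n : ℕ} (x y : Fin (n + 1) → 𝔽) : ℝ :=
  Real.arccos (‖∑ i, star (x i) * y i‖ /
    Real.sqrt ((∑ i, ‖x i‖ ^ 2) * (∑ i, ‖y i‖ ^ 2)))

/-- The geodesic distance on `P^n_𝔽` fails to be of negative type. -/
def ProjDistNotNegType (𝔽 : Type*) [NormedDivisionRing 𝔽] [StarRing 𝔽]
    (n : ℕ) : Prop :=
  ∃ (m : ℕ) (x : Fin m → (Fin (n + 1) → 𝔽)) (t : Fin m → ℝ),
    (∀ i, x i ≠ 0) ∧ (∑ i, t i) = 0 ∧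
    0 < ∑ i, ∑ j, t i * t j * projDist (x i) (x j)

/-
Inside `RP²` take the three coordinate axes and the six lines spanned by the face diagonals
`(1, ±1, 0), (1, 0, ±1), (0, 1, ±1)` of the cube; their mutual distances are `π/4`, `π/3` or
`π/2`, and explicit weights of total mass zero make `∑ tᵢ tⱼ d(xᵢ, xⱼ) = 78π > 0`. For `n ≥ 2`,
real vectors placed in the first three coordinates embed `RP²` isometrically into `P^n_𝔽`,
because `ℝ` sits in `𝔽` as star-fixed scalars of the same norm; so the same configuration works
there.
-/

open Real

theorem ProjDistNotNegType.of_projDist_comp {𝔽 𝕂 : Type*} [NormedDivisionRing 𝔽] [StarRing 𝔽]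
    [NormedDivisionRing 𝕂] [StarRing 𝕂] {k n : ℕ} (φ : (Fin (k + 1) → 𝕂) → Fin (n + 1) → 𝔽)
    (hφ : ∀ x, x ≠ 0 → φ x ≠ 0) (hdist : ∀ x y, projDist (φ x) (φ y) = projDist x y)
    (h : ProjDistNotNegType 𝕂 k) : ProjDistNotNegType 𝔽 n := by
  obtain ⟨m, x, t, hx, ht, hpos⟩ := h
  exact ⟨m, φ ∘ x, t, fun i => hφ _ (hx i), ht, by simpa only [Function.comp, hdist] using hpos⟩

section RealEmbedding

variable {𝔽 : Type*} [NormedDivisionRing 𝔽] [NormedAlgebra ℝ 𝔽] {k n : ℕ}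

variable (𝔽) in
noncomputable def realEmbed (h : k ≤ n) (x : Fin (k + 1) → ℝ) : Fin (n + 1) → 𝔽 :=
  Function.extend (Fin.castLE (by omega)) (fun j => algebraMap ℝ 𝔽 (x j)) 0

lemma realEmbed_castLE (h : k ≤ n) (x : Fin (k + 1) → ℝ) (j : Fin (k + 1)) :
    realEmbed 𝔽 h x (Fin.castLE (by omega) j) = algebraMap ℝ 𝔽 (x j) :=
  (Fin.castLE_injective _).extend_apply _ _ j

lemma sum_realEmbed {M : Type*} [AddCommMonoid M] (h : k ≤ n) (g : 𝔽 → 𝔽 → M)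
    (hg : g 0 0 = 0) (x y : Fin (k + 1) → ℝ) :
    ∑ i, g (realEmbed 𝔽 h x i) (realEmbed 𝔽 h y i) =
      ∑ j, g (algebraMap ℝ 𝔽 (x j)) (algebraMap ℝ 𝔽 (y j)) := by
  refine (Fintype.sum_of_injective _ (Fin.castLE_injective (by omega)) _ _ (fun i hi => ?_)
    (fun j => by rw [realEmbed_castLE, realEmbed_castLE])).symm
  simp [realEmbed, Function.extend_apply' _ _ _ hi, hg]

lemma realEmbed_ne_zero (h : k ≤ n) {x : Fin (k + 1) → ℝ} (hx : x ≠ 0) :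
    realEmbed 𝔽 h x ≠ 0 := by
  obtain ⟨j, hj⟩ := Function.ne_iff.1 hx
  intro h0
  have hj0 := congrFun h0 (Fin.castLE (by omega) j)
  rw [realEmbed_castLE] at hj0
  simp_all

lemma projDist_realEmbed [StarRing 𝔽] [NormOneClass 𝔽]
    (hstar : ∀ r : ℝ, star (algebraMap ℝ 𝔽 r) = algebraMap ℝ 𝔽 r)
    (h : k ≤ n) (x y : Fin (k + 1) → ℝ) :
    projDist (realEmbed 𝔽 h x) (realEmbed 𝔽 h y) = projDist x y := by
  have hinner : ∑ i, star (realEmbed 𝔽 h x i) * realEmbed 𝔽 h y i =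
      algebraMap ℝ 𝔽 (∑ j, star (x j) * y j) := by
    rw [sum_realEmbed h (fun a b => star a * b) (by simp), map_sum]
    simp [hstar]
  have hnormSq (z : Fin (k + 1) → ℝ) : ∑ i, ‖realEmbed 𝔽 h z i‖ ^ 2 = ∑ j, ‖z j‖ ^ 2 := by
    rw [sum_realEmbed h (fun a _ => ‖a‖ ^ 2) (by simp) z z]
    simp [norm_algebraMap']
  rw [projDist, projDist, hinner, hnormSq, hnormSq, norm_algebraMap']

end RealEmbedding

lemma arccos_one_half : arccos (1 / 2) = π / 3 := by
  rw [← cos_pi_div_three, arccos_cos] <;> linarith [pi_pos]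

lemma arccos_inv_sqrt_two : arccos (√2)⁻¹ = π / 4 := by
  have hcos : (√2)⁻¹ = cos (π / 4) := by
    rw [cos_pi_div_four]
    field_simp
    simp
  rw [hcos, arccos_cos] <;> linarith [pi_pos]

lemma projDist_fin_three (x y : Fin 3 → ℝ) :
    projDist x y = arccos (|x 0 * y 0 + x 1 * y 1 + x 2 * y 2| /
      √((x 0 ^ 2 + x 1 ^ 2 + x 2 ^ 2) * (y 0 ^ 2 + y 1 ^ 2 + y 2 ^ 2))) := by
  simp [projDist, Fin.sum_univ_three]

def rp2Points : Fin 9 → Fin 3 → ℝ :=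
  ![![1, 0, 0], ![0, 1, 0], ![0, 0, 1],
    ![1, 1, 0], ![1, -1, 0], ![1, 0, 1], ![1, 0, -1], ![0, 1, 1], ![0, 1, -1]]

def rp2Weights : Fin 9 → ℝ := ![-8, -8, 16, 18, 18, -9, -9, -9, -9]

theorem projDistNotNegType_real_two : ProjDistNotNegType ℝ 2 := by
  refine ⟨9, rp2Points, rp2Weights, fun i => ?_, ?_, ?_⟩
  · fin_cases i <;> simp [rp2Points, funext_iff, Fin.forall_fin_succ]
  · simp [rp2Weights, Fin.sum_univ_succ]
    norm_num
  · have hvalue : ∑ i, ∑ j, rp2Weights i * rp2Weights j *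
        projDist (rp2Points i) (rp2Points j) = 78 * π := by
      simp [Fin.sum_univ_succ, projDist_fin_three, rp2Points, rp2Weights]
      norm_num [arccos_one_half, arccos_inv_sqrt_two]
      ring
    rw [hvalue]
    positivity

theorem projDistNotNegType_of_two_le {𝔽 : Type*} [NormedDivisionRing 𝔽] [StarRing 𝔽]
    [NormedAlgebra ℝ 𝔽] [NormOneClass 𝔽]
    (hstar : ∀ r : ℝ, star (algebraMap ℝ 𝔽 r) = algebraMap ℝ 𝔽 r) {n : ℕ} (hn : 2 ≤ n) :
    ProjDistNotNegType 𝔽 n :=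
  projDistNotNegType_real_two.of_projDist_comp (realEmbed 𝔽 hn)
    (fun _ => realEmbed_ne_zero hn) (projDist_realEmbed hstar hn)

/-- The geodesic distance on any projective space `P^n_𝔽` (`𝔽 = ℝ, ℂ, ℍ`;
`n ≥ 2`) is not of negative type (each such projective space contains `RP²` as a
geodesic subspace, and the geodesic distance on `RP²` is not of negative type). -/
theorem projective_space_dist_not_negative_type (n : ℕ) (hn : 2 ≤ n) :
    ProjDistNotNegType ℝ n ∧ ProjDistNotNegType ℂ n ∧
      ProjDistNotNegType (Quaternion ℝ) n :=
  ⟨projDistNotNegType_of_two_le (fun _ => star_trivial _) hn,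
    projDistNotNegType_of_two_le (fun r => Complex.conj_ofReal r) hn,
    projDistNotNegType_of_two_le (fun r => Quaternion.star_coe r) hn⟩
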